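/- arXiv:2011.04072 — 2 statements merged into one kernel-verified Lean document; each statement's English description precedes it below -/
import Mathlib

section
/- For natural numbers a, b, l with l ≤ b ≤ a and 1 ≤ b, the inequality 2·H_{a+b-l} - H_a - H_b ≤ (H_a - H_l) + (H_b - H_l) holds, where H_n is the n-th harmonic number. -/
/-
Writing `k = b - l`, the claim is `H (a + k) - H a ≤ H (l + k) - H l`: both sides are sums of `k`
consecutive reciprocals, and the left one starts further out since `l ≤ a`.
-/

noncomputable def H (n : ℕ) : ℝ := ∑ i ∈ Finset.range n, (1 : ℝ) / (i + 1)

lemma H_add (n k : ℕ) : H (n + k) = H n + ∑ i ∈ Finset.range k, (1 : ℝ) / (n + i + 1) := by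
  simp [H, Finset.sum_range_add, add_assoc]

lemma H_add_sub_H_le_of_le {l a : ℕ} (hla : l ≤ a) (k : ℕ) :
    H (a + k) - H a ≤ H (l + k) - H l := by
  rw [H_add, H_add, add_sub_cancel_left, add_sub_cancel_left]
  have hla' : (l : ℝ) ≤ a := by exact_mod_cast hla
  gcongr

theorem stmt2_general (a b l : ℕ) (hlb : l ≤ b) (hba : b ≤ a) :
    2 * H (a + b - l) - H a - H b ≤ (H a - H l) + (H b - H l) := by
  have hab : a + b - l = a + (b - l) := by omega
  have hb : b = l + (b - l) := by omega
  have key := H_add_sub_H_le_of_le (hlb.trans hba) (b - l)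
  rw [← hab, ← hb] at key
  linarith

theorem stmt2 (a b l : ℕ) (hlb : l ≤ b) (hba : b ≤ a) (hb : 1 ≤ b) :
    2 * H (a + b - l) - H a - H b ≤ (H a - H l) + (H b - H l) :=
  stmt2_general a b l hlb hba
end

section
/- For any two lists A and B over a type with decidable equality, there exists a list S such that A and B are both sublists of S and |S| = |A| + |B| - lcsLen(A,B). -/
open List

noncomputable def lcsLen {α : Type*} (A B : List α) : ℕ :=
  sSup {n : ℕ | ∃ L : List α, L.Sublist A ∧ L.Sublist B ∧ L.length = n}

noncomputable def d {α : Type*} (A B : List α) : ℝ :=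
  2 * H (A.length + B.length - lcsLen A B) - H A.length - H B.length

/-!
Take a longest common subsequence `L` of `A` and `B` and merge `A` and `B` along it: each letter
of `L` is written once, and the letters of `A` and `B` between consecutive letters of `L` are
written in between. The merge contains both lists and has length `|A| + |B| - |L|`.
-/

theorem List.exists_eq_append_cons_of_cons_sublist {α : Type*} {a : α} {L B : List α}
    (h : (a :: L).Sublist B) : ∃ B₁ B₂, B = B₁ ++ a :: B₂ ∧ L.Sublist B₂ := by
  obtain ⟨r₁, r₂, rfl, ha, hL⟩ := List.cons_sublist_iff.1 h
  obtain ⟨s, t, rfl⟩ := List.append_of_mem ha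
  exact ⟨s, t ++ r₂, by simp, hL.trans (List.sublist_append_right t r₂)⟩

theorem List.Sublist.exists_supersequence_length_add {α : Type*} {L A B : List α}
    (hA : L.Sublist A) (hB : L.Sublist B) :
    ∃ S : List α, A.Sublist S ∧ B.Sublist S ∧ S.length + L.length = A.length + B.length := by
  induction hA generalizing B with
  | slnil => exact ⟨B, nil_sublist B, Sublist.refl B, by simp⟩
  | cons a _ ih =>
    obtain ⟨S, hAS, hBS, hlen⟩ := ih hB
    exact ⟨a :: S, hAS.cons_cons a, hBS.cons a, by simp only [length_cons]; omega⟩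
  | cons_cons a _ ih =>
    obtain ⟨B₁, B₂, rfl, hB₂⟩ := List.exists_eq_append_cons_of_cons_sublist hB
    obtain ⟨S, hAS, hBS, hlen⟩ := ih hB₂
    refine ⟨B₁ ++ a :: S, ?_, (hBS.cons_cons a).append_left B₁, ?_⟩
    · exact (hAS.cons_cons a).trans (sublist_append_right B₁ _)
    · simp only [length_append, length_cons]
      omega

theorem exists_common_sublist_length_eq_lcsLen {α : Type*} (A B : List α) :
    ∃ L : List α, L.Sublist A ∧ L.Sublist B ∧ L.length = lcsLen A B :=
  Nat.sSup_mem (s := {n | ∃ L : List α, L.Sublist A ∧ L.Sublist B ∧ L.length = n})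
    ⟨0, [], nil_sublist A, nil_sublist B, rfl⟩
    ⟨A.length, fun _ ⟨_, hLA, _, hlen⟩ => hlen ▸ hLA.length_le⟩

theorem stmt11_general {α : Type*} (A B : List α) :
    ∃ S : List α, A.Sublist S ∧ B.Sublist S ∧
      S.length = A.length + B.length - lcsLen A B := by
  obtain ⟨L, hLA, hLB, hL⟩ := exists_common_sublist_length_eq_lcsLen A B
  obtain ⟨S, hAS, hBS, hS⟩ := hLA.exists_supersequence_length_add hLB
  exact ⟨S, hAS, hBS, by omega⟩

theorem stmt11 {α : Type*} [DecidableEq α] (A B : List α) :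
    ∃ S : List α, A.Sublist S ∧ B.Sublist S ∧
      S.length = A.length + B.length - lcsLen A B :=
  stmt11_general A B
end
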